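/- Let P be a column-stochastic primitive n×n matrix with y[t] = P^t 1 having positive entries, Q[t] = diag(y[t+1])^{-1} P diag(y[t]), and Φ(t,s) = Q[t]⋯Q[s]. Then for every fixed s ≥ 0, lim_{t→∞} Φ(t,s) = (1/n) 1 y[s]^T, and this limit matrix is row-stochastic. -/

import Mathlib

/-!
Write `Φ(s + k, s) = diag(y[s+k+1])⁻¹ P^(k+1) diag(y[s])`. If every entry of `P^p` is at least
`δ > 0`, then multiplying a row vector by `P^p` shrinks its oscillation `max - min` by the factor
`1 - nδ < 1`, while multiplying by `P` never increases its maximum nor decreases its minimum.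
Hence every row of `P^k` tends to a constant vector, i.e. `P^k → v 1ᵀ` with `v > 0`. As `P`
preserves column sums, `y[s+k+1] = P^(k+1) y[s] → (1ᵀ y[s]) v = n v`, and the `(i, j)` entry of
`Φ(s + k, s)` tends to `v i * y[s] j / (n * v i) = y[s] j / n`.
-/

open Matrix Finset Filter

/-- `Phi Q s k` is the product `Q (s+k) * Q (s+k-1) * ⋯ * Q s`, i.e. `Φ(s+k, s)`. -/
def Phi {n : ℕ} (Q : ℕ → Matrix (Fin n) (Fin n) ℝ) (s : ℕ) : ℕ → Matrix (Fin n) (Fin n) ℝ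
  | 0 => Q s
  | k + 1 => Q (s + k + 1) * Phi Q s k

open Topology

lemma exists_tendsto_of_antitone_of_monotone_of_sub_le_mul {up lo : ℕ → ℝ} (hup : Antitone up)
    (hlo : Monotone lo) (hle : ∀ k, lo k ≤ up k) {p : ℕ} {c : ℝ} (hc : c < 1)
    (hgap : ∀ k, up (k + p) - lo (k + p) ≤ c * (up k - lo k)) :
    ∃ L, Tendsto up atTop (𝓝 L) ∧ Tendsto lo atTop (𝓝 L) := by
  have hU := tendsto_atTop_ciInf hup ⟨lo 0, by
    rintro _ ⟨k, rfl⟩; exact (hlo k.zero_le).trans (hle k)⟩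
  have hL := tendsto_atTop_ciSup hlo ⟨up 0, by
    rintro _ ⟨k, rfl⟩; exact (hle k).trans (hup k.zero_le)⟩
  set U := ⨅ k, up k
  set L := ⨆ k, lo k
  have hLU : L ≤ U := le_of_tendsto_of_tendsto' hL hU hle
  have hgap_lim : U - L ≤ c * (U - L) :=
    le_of_tendsto_of_tendsto' ((hU.sub hL).comp (tendsto_add_atTop_nat p))
      ((hU.sub hL).const_mul c) hgap
  have hUL : U = L := by nlinarith
  exact ⟨_, hU, hUL ▸ hL⟩

namespace Matrix

variable {ι : Type*} [Fintype ι] {M : Matrix ι ι ℝ}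

lemma mul_le_vecMul_of_le {c a : ℝ} {x : ι → ℝ} (hM : ∀ i j, 0 ≤ M i j)
    (hc : ∀ j, ∑ i, M i j = c) (hx : ∀ i, a ≤ x i) (j : ι) : c * a ≤ (x ᵥ* M) j := by
  rw [← hc j, sum_mul]
  exact sum_le_sum fun i _ => by
    rw [mul_comm (M i j)]; exact mul_le_mul_of_nonneg_right (hx i) (hM i j)

lemma vecMul_le_mul_of_le {c b : ℝ} {x : ι → ℝ} (hM : ∀ i j, 0 ≤ M i j)
    (hc : ∀ j, ∑ i, M i j = c) (hx : ∀ i, x i ≤ b) (j : ι) : (x ᵥ* M) j ≤ c * b := by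
  rw [← hc j, sum_mul]
  exact sum_le_sum fun i _ => by
    rw [mul_comm (M i j)]; exact mul_le_mul_of_nonneg_right (hx i) (hM i j)

lemma vecMul_sub_vecMul_le [DecidableEq ι] {δ a b : ℝ} {x : ι → ℝ}
    (hM : M ∈ colStochastic ℝ ι)
    (hδ : ∀ i j, δ ≤ M i j) (ha : ∀ i, a ≤ x i) (hb : ∀ i, x i ≤ b) (j j' : ι) :
    (x ᵥ* M) j - (x ᵥ* M) j' ≤ (1 - Fintype.card ι * δ) * (b - a) := by
  set N : Matrix ι ι ℝ := M - of fun _ _ => δ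
  have hN : ∀ i j, 0 ≤ N i j := fun i j => sub_nonneg.2 (hδ i j)
  have hNc : ∀ j, ∑ i, N i j = 1 - Fintype.card ι * δ := fun j => by
    simp [N, sum_sub_distrib, sum_col_of_mem_colStochastic hM]
  have hsplit : ∀ j, (x ᵥ* M) j = (x ᵥ* N) j + δ * ∑ i, x i := fun j => by
    simp [N, vecMul, dotProduct, mul_sub, sum_sub_distrib, mul_sum, mul_comm]
  rw [hsplit, hsplit, mul_sub]
  linarith [vecMul_le_mul_of_le hN hNc hb j, mul_le_vecMul_of_le hN hNc ha j']

variable [DecidableEq ι]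

theorem exists_tendsto_vecMul_pow [Nonempty ι] (hM : M ∈ colStochastic ℝ ι) {p : ℕ}
    {δ : ℝ} (hδ : 0 < δ) (hp : ∀ i j, δ ≤ (M ^ p) i j) (x : ι → ℝ) :
    ∃ L : ℝ, Tendsto (fun k => x ᵥ* M ^ k) atTop (𝓝 fun _ => L) := by
  have hM0 := (mem_colStochastic_iff_sum.1 hM).1
  have hM1 := (mem_colStochastic_iff_sum.1 hM).2
  set g : ℕ → ι → ℝ := fun k => x ᵥ* M ^ k
  set up : ℕ → ℝ := fun k => univ.sup' univ_nonempty (g k)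
  set lo : ℕ → ℝ := fun k => univ.inf' univ_nonempty (g k)
  have hg_succ : ∀ k, g (k + 1) = g k ᵥ* M := fun k => by simp [g, pow_succ, vecMul_vecMul]
  have hg_add : ∀ k, g (k + p) = g k ᵥ* M ^ p := fun k => by simp [g, pow_add, vecMul_vecMul]
  have hlo_le_g : ∀ k i, lo k ≤ g k i := fun k i => inf'_le _ (mem_univ i)
  have hg_le_up : ∀ k i, g k i ≤ up k := fun k i => le_sup' _ (mem_univ i)
  have hup_anti : Antitone up := antitone_nat_of_succ_le fun k => sup'_le _ _ fun j _ => by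
    simpa [hg_succ] using vecMul_le_mul_of_le hM0 hM1 (hg_le_up k) j
  have hlo_mono : Monotone lo := monotone_nat_of_le_succ fun k => le_inf' _ _ fun j _ => by
    simpa [hg_succ] using mul_le_vecMul_of_le hM0 hM1 (hlo_le_g k) j
  have hlo_le_up : ∀ k, lo k ≤ up k := fun k =>
    (hlo_le_g k (Classical.arbitrary ι)).trans (hg_le_up k _)
  have hcontr : ∀ k, up (k + p) - lo (k + p) ≤ (1 - Fintype.card ι * δ) * (up k - lo k) := by
    intro k
    obtain ⟨j, -, hj⟩ := exists_mem_eq_sup' univ_nonempty (g (k + p))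
    obtain ⟨j', -, hj'⟩ := exists_mem_eq_inf' univ_nonempty (g (k + p))
    simp only [up, lo, hj, hj', hg_add]
    exact vecMul_sub_vecMul_le (pow_mem hM p) hp (hlo_le_g k) (hg_le_up k) j j'
  have hcard : (0 : ℝ) < Fintype.card ι := by exact_mod_cast Fintype.card_pos
  obtain ⟨L, hU, hL⟩ := exists_tendsto_of_antitone_of_monotone_of_sub_le_mul hup_anti hlo_mono
    hlo_le_up (by nlinarith [mul_pos hcard hδ]) hcontr
  exact ⟨L, tendsto_pi_nhds.2 fun i => tendsto_of_tendsto_of_tendsto_of_le_of_le hL hU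
    (fun k => hlo_le_g k i) (fun k => hg_le_up k i)⟩

theorem exists_tendsto_pow_of_mem_colStochastic (hM : M ∈ colStochastic ℝ ι)
    (hprim : ∃ p, ∀ i j, 0 < (M ^ p) i j) :
    ∃ v : ι → ℝ, (∀ i, 0 < v i) ∧
      Tendsto (fun k => M ^ k) atTop (𝓝 (of fun i _ => v i)) := by
  cases isEmpty_or_nonempty ι
  · exact ⟨0, isEmptyElim, tendsto_pi_nhds.2 isEmptyElim⟩
  obtain ⟨p, hp⟩ := hprim
  obtain ⟨⟨i₀, j₀⟩, hmin⟩ := Finite.exists_min fun q : ι × ι => (M ^ p) q.1 q.2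
  have hδ : ∀ i j, (M ^ p) i₀ j₀ ≤ (M ^ p) i j := fun i j => hmin (i, j)
  choose v hv using fun i => exists_tendsto_vecMul_pow hM (hp i₀ j₀) hδ (Pi.single i 1)
  simp only [single_one_vecMul] at hv
  have hrows : ∀ i j, Tendsto (fun k => (M ^ k) i j) atTop (𝓝 (v i)) := fun i =>
    tendsto_pi_nhds.1 (hv i)
  refine ⟨v, fun i => ?_, tendsto_pi_nhds.2 fun i => tendsto_pi_nhds.2 (hrows i)⟩
  have hlower : ∀ k j, (M ^ p) i₀ j₀ ≤ (M ^ (k + p)) i j := fun k j => by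
    rw [add_comm, pow_add, mul_apply_eq_vecMul]
    simpa using mul_le_vecMul_of_le (pow_mem hM k).1
      (sum_col_of_mem_colStochastic (pow_mem hM k)) (hδ i) j
  exact (hp i₀ j₀).trans_le <| ge_of_tendsto ((hrows i i).comp (tendsto_add_atTop_nat p))
    (Eventually.of_forall fun k => hlower k i)

end Matrix

lemma Phi_eq_diagonal_mul_pow_mul_diagonal {n : ℕ} {P : Matrix (Fin n) (Fin n) ℝ}
    {d : ℕ → Fin n → ℝ} (hd : ∀ t i, d t i ≠ 0) {Q : ℕ → Matrix (Fin n) (Fin n) ℝ}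
    (hQ : ∀ t, Q t = diagonal (fun i => (d (t + 1) i)⁻¹) * P * diagonal (d t)) (s k : ℕ) :
    Phi Q s k = diagonal (fun i => (d (s + k + 1) i)⁻¹) * P ^ (k + 1) * diagonal (d s) := by
  induction k with
  | zero => simpa [Phi] using hQ s
  | succ k ih =>
    have hcancel : diagonal (d (s + k + 1)) * diagonal (fun i => (d (s + k + 1) i)⁻¹) = 1 := by
      rw [diagonal_mul_diagonal, ← diagonal_one]
      exact congrArg diagonal (funext fun i => mul_inv_cancel₀ (hd _ i))
    rw [Phi, ih, hQ, show s + (k + 1) + 1 = s + k + 1 + 1 by ring]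
    simp only [Matrix.mul_assoc]
    rw [← Matrix.mul_assoc (diagonal (d (s + k + 1))), hcancel, Matrix.one_mul,
      pow_succ' P (k + 1), Matrix.mul_assoc P]

theorem stmt_4 {n : ℕ} (P : Matrix (Fin n) (Fin n) ℝ)
    (hnonneg : ∀ i j, 0 ≤ P i j)
    (hcol : ∀ j, ∑ i, P i j = 1)
    (hprim : ∃ k : ℕ, ∀ i j, 0 < (P ^ k) i j)
    (y : ℕ → Fin n → ℝ)
    (hy : ∀ t, y t = (P ^ t) *ᵥ (fun _ => (1 : ℝ)))
    (hypos : ∀ t i, 0 < y t i)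
    (Q : ℕ → Matrix (Fin n) (Fin n) ℝ)
    (hQ : ∀ t, Q t = Matrix.diagonal (fun i => (y (t + 1) i)⁻¹) * P * Matrix.diagonal (y t)) :
    ∀ s : ℕ,
      Tendsto (fun k => Phi Q s k) atTop
        (nhds (Matrix.of fun _ j => y s j / n))
      ∧ (∀ i j : Fin n, 0 ≤ (Matrix.of fun _ j => y s j / n) i j)
      ∧ (∀ i : Fin n, ∑ j, (Matrix.of fun _ j => y s j / n) i j = 1) := by
  intro s
  have hP : P ∈ colStochastic ℝ (Fin n) := mem_colStochastic_iff_sum.2 ⟨hnonneg, hcol⟩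
  have hsum : ∑ j, y s j = n := by
    simpa [hy] using sum_mulVec_of_mem_colStochastic (pow_mem hP s) (x := fun _ => 1)
  obtain ⟨v, hv_pos, hv⟩ := exists_tendsto_pow_of_mem_colStochastic hP hprim
  have hpow : Tendsto (fun k => P ^ (k + 1)) atTop (𝓝 (of fun i _ => v i)) :=
    hv.comp (tendsto_add_atTop_nat 1)
  have hy_succ : Tendsto (fun k => y (s + k + 1)) atTop (𝓝 fun i => v i * n) := by
    have hyk : ∀ k, y (s + k + 1) = P ^ (k + 1) *ᵥ y s := fun k => by
      rw [hy, hy, mulVec_mulVec, ← pow_add, show k + 1 + s = s + k + 1 by ring]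
    have hlim : of (fun i _ => v i) *ᵥ y s = fun i => v i * n := by
      ext i; simp [mulVec, dotProduct, ← mul_sum, hsum]
    rw [funext hyk, ← hlim]
    exact ((continuous_id.matrix_mulVec continuous_const).tendsto _).comp hpow
  refine ⟨tendsto_pi_nhds.2 fun i => tendsto_pi_nhds.2 fun j => ?_,
    fun i j => div_nonneg (hypos s j).le n.cast_nonneg, fun i => ?_⟩
  · have hentry : ∀ k, Phi Q s k i j = (P ^ (k + 1)) i j * y s j / y (s + k + 1) i := fun k => by
      rw [Phi_eq_diagonal_mul_pow_mul_diagonal (fun t i => (hypos t i).ne') hQ]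
      simp [div_eq_mul_inv]
      ring
    have hvn : v i * n ≠ 0 := (mul_pos (hv_pos i) (Nat.cast_pos.2 i.pos)).ne'
    simp only [hentry, of_apply]
    rw [← mul_div_mul_left (y s j) (n : ℝ) (hv_pos i).ne']
    exact ((tendsto_pi_nhds.1 (tendsto_pi_nhds.1 hpow i) j).mul_const (y s j)).div
        (tendsto_pi_nhds.1 hy_succ i) hvn
  · simp [← sum_div, hsum, i.pos.ne']
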